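/- Let X, X₁,…,Xₙ be iid Pareto(α) with α ∈ (0,1] and (θ₁,…,θₙ) in the simplex with at least two θᵢ > 0. Then for every p ∈ (0,1), VaR_p(∑ᵢ θᵢXᵢ) > ∑ᵢ θᵢ·VaR_p(Xᵢ) = VaR_p(X); i.e., Value-at-Risk is strictly superadditive for weighted averages of iid ultra heavy-tailed Pareto losses at every level p. -/

import Mathlib

/-!
For `α ≤ 1` the power-mean inequality gives `∑ θᵢ Xᵢ ≥ (∑ θᵢ Xᵢ ^ α) ^ (1/α)`, and since all
`Xᵢ ≥ 1`, the weighted sum exceeds `t > 1` as soon as a single `Xₖ` exceeds the level `bₖ` given by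
`θₖ bₖ ^ α = r + θₖ`, where `r = t ^ α - 1`. By independence, the probability that no `Xₖ` does is
`∏ₖ r / (r + θₖ)`, and the strict Bernoulli inequality `r / (r + θ) < (r / (r + 1)) ^ θ` for
`0 < θ < 1` bounds this product by `r / (r + 1) = 1 - t ^ (-α)`. Hence `P(∑ θᵢ Xᵢ > t) > P(X > t)`
for every `t > 1`. At `t = VaR_p(X) = (1 - p) ^ (-1/α)` this says that the distribution function
of the sum is below `p` at `t`, and right continuity puts its `p`-quantile strictly above `t`.
-/

open MeasureTheory ProbabilityTheory Set

/-- `X` is a Pareto(α) random variable under `P`: `P(X > t) = t^{-α}` for `t ≥ 1`,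
and `X ≥ 1` almost surely. -/
def IsPareto {Ω : Type*} [MeasurableSpace Ω] (P : Measure Ω) (X : Ω → ℝ) (α : ℝ) : Prop :=
  Measurable X ∧ P {ω | 1 ≤ X ω} = 1 ∧
    ∀ t : ℝ, 1 ≤ t → P {ω | t < X ω} = ENNReal.ofReal (t ^ (-α))

/-- Value-at-Risk at level `p`: the left `p`-quantile. -/
noncomputable def VaR {Ω : Type*} [MeasurableSpace Ω] (P : Measure Ω) (Y : Ω → ℝ)
    (p : ℝ) : ℝ :=
  sInf {t : ℝ | ENNReal.ofReal p ≤ P {ω | Y ω ≤ t}}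

namespace Real

lemma div_add_lt_rpow_div_add_one {r w : ℝ} (hr : 0 < r) (hw0 : 0 < w) (hw1 : w < 1) :
    r / (r + w) < (r / (r + 1)) ^ w := by
  have bernoulli : (1 + r⁻¹) ^ w < 1 + w * r⁻¹ :=
    rpow_one_add_lt_one_add_mul_self (by linarith [inv_pos.2 hr]) (inv_ne_zero hr.ne') hw0 hw1
  have h1 : r / (r + w) = (1 + w * r⁻¹)⁻¹ := by field_simp
  have h2 : r / (r + 1) = (1 + r⁻¹)⁻¹ := by field_simp
  rw [h1, h2, inv_rpow (by positivity)]
  exact inv_strictAnti₀ (by positivity) bernoulli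

lemma prod_div_add_lt_div_add_one {ι : Type*} {s : Finset ι} {w : ι → ℝ} {r : ℝ} (hr : 0 < r)
    (hw : ∀ k ∈ s, 0 < w k ∧ w k < 1) (hsum : ∑ k ∈ s, w k = 1) :
    ∏ k ∈ s, r / (r + w k) < r / (r + 1) :=
  calc ∏ k ∈ s, r / (r + w k)
      < ∏ k ∈ s, (r / (r + 1)) ^ w k :=
        Finset.prod_lt_prod_of_nonempty (fun k hk => by have := (hw k hk).1; positivity)
          (fun k hk => div_add_lt_rpow_div_add_one hr (hw k hk).1 (hw k hk).2)
          (Finset.nonempty_of_sum_ne_zero (f := w) (by simp [hsum]))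
    _ = r / (r + 1) := by rw [← rpow_sum_of_pos (by positivity), hsum, rpow_one]

lemma one_lt_one_sub_rpow_neg_inv {p α : ℝ} (hp0 : 0 < p) (hp1 : p < 1) (hα : 0 < α) :
    1 < (1 - p) ^ (-α⁻¹) :=
  one_lt_rpow_of_pos_of_lt_one_of_neg (by linarith) (by linarith) (by simpa using hα)

lemma one_sub_rpow_neg_inv_rpow_neg {p α : ℝ} (hp : p < 1) (hα : α ≠ 0) :
    ((1 - p) ^ (-α⁻¹)) ^ (-α) = 1 - p := by
  rw [neg_inv, rpow_inv_rpow (by linarith) (neg_ne_zero.2 hα)]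

end Real

lemma lt_one_of_two_pos {ι : Type*} [Fintype ι] {θ : ι → ℝ} (hθ : ∀ i, 0 ≤ θ i)
    (hsum : ∑ i, θ i = 1) (htwo : ∃ i j, i ≠ j ∧ 0 < θ i ∧ 0 < θ j) (k : ι) : θ k < 1 := by
  obtain ⟨i, j, hij, hi, hj⟩ := htwo
  obtain ⟨l, hkl, hl⟩ : ∃ l, k ≠ l ∧ 0 < θ l := by
    rcases eq_or_ne k i with rfl | hki
    · exact ⟨j, hij, hj⟩
    · exact ⟨i, hki, hi⟩
  have := Finset.add_le_sum (fun m _ => hθ m) (Finset.mem_univ k) (Finset.mem_univ l) hkl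
  linarith

lemma lt_sum_mul_of_lt_mul_rpow {ι : Type*} [Fintype ι] {θ x : ι → ℝ} {α t : ℝ}
    (hα0 : 0 < α) (hα1 : α ≤ 1) (ht : 0 ≤ t) (hθ : ∀ i, 0 ≤ θ i) (hsum : ∑ i, θ i = 1)
    (hx : ∀ i, 1 ≤ x i) {k : ι} (hk : t ^ α - 1 + θ k < θ k * x k ^ α) :
    t < ∑ i, θ i * x i := by
  have hx0 : ∀ i, 0 ≤ x i := fun i => zero_le_one.trans (hx i)
  have mean_gt : t ^ α < ∑ i, θ i * x i ^ α := by
    have hterm : θ k * (x k ^ α - 1) ≤ ∑ i, θ i * (x i ^ α - 1) :=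
      Finset.single_le_sum (f := fun i => θ i * (x i ^ α - 1))
        (fun i _ => mul_nonneg (hθ i) (by linarith [Real.one_le_rpow (hx i) hα0.le]))
        (Finset.mem_univ k)
    simp only [mul_sub, mul_one, Finset.sum_sub_distrib, hsum] at hterm
    linarith
  have power_mean : (∑ i, θ i * x i ^ α) ^ α⁻¹ ≤ ∑ i, θ i * x i := by
    have := Real.rpow_arith_mean_le_arith_mean_rpow Finset.univ θ (fun i => x i ^ α)
      (fun i _ => hθ i) hsum (fun i _ => by have := hx0 i; positivity)
      (one_le_inv_iff₀.2 ⟨hα0, hα1⟩)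
    simpa only [← Real.rpow_mul (hx0 _), mul_inv_cancel₀ hα0.ne', Real.rpow_one] using this
  calc t = (t ^ α) ^ α⁻¹ := by rw [← Real.rpow_mul ht, mul_inv_cancel₀ hα0.ne', Real.rpow_one]
    _ < (∑ i, θ i * x i ^ α) ^ α⁻¹ :=
        Real.rpow_lt_rpow (by positivity) mean_gt (inv_pos.2 hα0)
    _ ≤ ∑ i, θ i * x i := power_mean

section Probability

variable {Ω : Type*} [MeasurableSpace Ω] {P : Measure Ω} [IsProbabilityMeasure P]

lemma lt_VaR_of_lt_measureReal_gt {Y : Ω → ℝ} (hY : Measurable Y) {p q : ℝ} (hp : p < 1)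
    (h : 1 - p < P.real {ω | q < Y ω}) : q < VaR P Y p := by
  have := Measure.isProbabilityMeasure_map (μ := P) hY.aemeasurable
  set F := cdf (P.map Y)
  have hF : ∀ x, F x = P.real {ω | Y ω ≤ x} := fun x => by
    rw [cdf_eq_real, map_measureReal_apply hY measurableSet_Iic]; rfl
  have hmem : ∀ x, ENNReal.ofReal p ≤ P {ω | Y ω ≤ x} ↔ p ≤ F x := fun x => by
    rw [hF, measureReal_def, ENNReal.ofReal_le_iff_le_toReal (measure_ne_top _ _)]
  have hFq : F q < p := by
    have hcompl : {ω | Y ω ≤ q} = {ω | q < Y ω}ᶜ := by ext; simp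
    rw [hF, hcompl, probReal_compl_eq_one_sub (measurableSet_lt measurable_const hY)]
    linarith
  obtain ⟨x, hqx, hFx⟩ : ∃ x, q < x ∧ F x < p :=
    ((((F.right_continuous q).mono Ioi_subset_Ici_self).eventually
      (gt_mem_nhds hFq)).and self_mem_nhdsWithin).exists.imp fun _ h => ⟨h.2, h.1⟩
  obtain ⟨u, hu⟩ := ((tendsto_cdf_atTop (P.map Y)).eventually (lt_mem_nhds hp)).exists
  refine hqx.trans_le (le_csInf ⟨u, (hmem u).2 hu.le⟩ fun v hv => ?_)
  by_contra! hvx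
  exact ((hmem v).1 hv).not_gt ((F.mono hvx.le).trans_lt hFx)

namespace IsPareto

variable {Z : Ω → ℝ} {α : ℝ}

lemma ae_one_le (hZ : IsPareto P Z α) : ∀ᵐ ω ∂P, 1 ≤ Z ω :=
  ae_iff.2 ((prob_compl_eq_zero_iff (hZ.1 measurableSet_Ici)).2 hZ.2.1)

lemma measureReal_le (hZ : IsPareto P Z α) {t : ℝ} (ht : 1 ≤ t) :
    P.real {ω | Z ω ≤ t} = 1 - t ^ (-α) := by
  have hcompl : {ω | Z ω ≤ t} = {ω | t < Z ω}ᶜ := by ext; simp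
  rw [hcompl, probReal_compl_eq_one_sub (measurableSet_lt measurable_const hZ.1),
    measureReal_def, hZ.2.2 t ht, ENNReal.toReal_ofReal (by positivity)]

lemma measureReal_le_rpow_inv (hZ : IsPareto P Z α) (hα : 0 < α) {c : ℝ} (hc : 1 ≤ c) :
    P.real {ω | Z ω ≤ c ^ α⁻¹} = 1 - c⁻¹ := by
  have hexp : α⁻¹ * -α = -1 := by field_simp
  rw [hZ.measureReal_le (Real.one_le_rpow hc (inv_nonneg.2 hα.le)),
    ← Real.rpow_mul (by linarith), hexp, Real.rpow_neg_one]

lemma VaR_eq (hZ : IsPareto P Z α) (hα : 0 < α) {p : ℝ} (hp : p ∈ Ioo (0 : ℝ) 1) :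
    VaR P Z p = (1 - p) ^ (-α⁻¹) := by
  set q := (1 - p) ^ (-α⁻¹)
  have hq : 1 < q := Real.one_lt_one_sub_rpow_neg_inv hp.1 hp.2 hα
  suffices {t : ℝ | ENNReal.ofReal p ≤ P {ω | Z ω ≤ t}} = Ici q by rw [VaR, this, csInf_Ici]
  ext t
  change ENNReal.ofReal p ≤ P {ω | Z ω ≤ t} ↔ q ≤ t
  rw [ENNReal.ofReal_le_iff_le_toReal (measure_ne_top _ _), ← measureReal_def]
  rcases lt_or_ge t 1 with ht | ht
  · have hnull : P.real {ω | Z ω ≤ t} ≤ 0 := by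
      calc P.real {ω | Z ω ≤ t} ≤ P.real {ω | Z ω ≤ 1} :=
            measureReal_mono fun ω (h : Z ω ≤ t) => h.trans ht.le
        _ = 0 := by rw [hZ.measureReal_le le_rfl, Real.one_rpow, sub_self]
    exact iff_of_false (by linarith [hp.1]) (by linarith)
  · rw [hZ.measureReal_le ht, le_sub_comm, ← Real.one_sub_rpow_neg_inv_rpow_neg hp.2 hα.ne',
      Real.rpow_le_rpow_iff_of_neg (by linarith) (by linarith) (by linarith)]

end IsPareto

theorem rpow_neg_lt_measureReal_sum_mul_gt {ι : Type*} [Fintype ι] {α : ℝ} (hα0 : 0 < α)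
    (hα1 : α ≤ 1)
    {Xs : ι → Ω → ℝ} (hXs : ∀ i, IsPareto P (Xs i) α) (hind : iIndepFun Xs P)
    {θ : ι → ℝ} (hθ : ∀ i, 0 ≤ θ i) (hsum : ∑ i, θ i = 1)
    (htwo : ∃ i j, i ≠ j ∧ 0 < θ i ∧ 0 < θ j) {t : ℝ} (ht : 1 < t) :
    t ^ (-α) < P.real {ω | t < ∑ i, θ i * Xs i ω} := by
  set r := t ^ α - 1
  have hr : 0 < r := by linarith [Real.one_lt_rpow ht hα0]
  set s := Finset.univ.filter fun k => 0 < θ k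
  have hs : ∀ k, k ∈ s ↔ 0 < θ k := by simp [s]
  have hc : ∀ k ∈ s, 1 ≤ (r + θ k) / θ k := fun k hk => by
    rw [le_div_iff₀ ((hs k).1 hk)]; linarith
  set b : ι → ℝ := fun k => ((r + θ k) / θ k) ^ α⁻¹
  set B := ⋂ k ∈ s, {ω | Xs k ω ≤ b k}
  have hB : P.real B = ∏ k ∈ s, r / (r + θ k) := by
    rw [measureReal_def, hind.meas_biInter (s := fun k => {ω | Xs k ω ≤ b k})
        fun k _ => ⟨Iic (b k), measurableSet_Iic, rfl⟩,
      ENNReal.toReal_prod]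
    refine Finset.prod_congr rfl fun k hk => ?_
    have : r + θ k ≠ 0 := by linarith [(hs k).1 hk]
    rw [← measureReal_def, (hXs k).measureReal_le_rpow_inv hα0 (hc k hk), inv_div]
    field_simp
    ring
  have hBc : Bᶜ ≤ᵐ[P] {ω | t < ∑ i, θ i * Xs i ω} := by
    filter_upwards [ae_all_iff.2 fun i => (hXs i).ae_one_le] with ω hω hωB
    obtain ⟨k, hk, hbk⟩ : ∃ k ∈ s, b k < Xs k ω := by simpa [B] using show ω ∉ B from hωB
    refine lt_sum_mul_of_lt_mul_rpow hα0 hα1 (by linarith) hθ hsum hω (k := k) ?_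
    have hbα : b k ^ α = (r + θ k) / θ k := by
      rw [← Real.rpow_mul (by linarith [hc k hk]), inv_mul_cancel₀ hα0.ne', Real.rpow_one]
    have hlt : b k ^ α < Xs k ω ^ α :=
      Real.rpow_lt_rpow (Real.rpow_nonneg (by linarith [hc k hk]) _) hbk hα0
    rw [hbα, div_lt_iff₀' ((hs k).1 hk)] at hlt
    linarith
  have hprod : ∏ k ∈ s, r / (r + θ k) < r / (r + 1) :=
    Real.prod_div_add_lt_div_add_one hr
      (fun k hk => ⟨(hs k).1 hk, lt_one_of_two_pos hθ hsum htwo k⟩)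
      (by rw [Finset.sum_filter_of_ne fun k _ hk => (hθ k).lt_of_ne' hk, hsum])
  have hmeas : MeasurableSet B :=
    .biInter s.countable_toSet fun k _ => measurableSet_le (hXs k).1 measurable_const
  calc t ^ (-α) = 1 - r / (r + 1) := by
        rw [Real.rpow_neg (by linarith)]
        field_simp
        ring
    _ < 1 - P.real B := by linarith
    _ = P.real Bᶜ := (probReal_compl_eq_one_sub hmeas).symm
    _ ≤ P.real {ω | t < ∑ i, θ i * Xs i ω} :=
        ENNReal.toReal_mono (measure_ne_top _ _) (measure_mono_ae hBc)

end Probability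

/-- Strict superadditivity of VaR at every level: for iid Pareto(α), `α ∈ (0,1]`, and
simplex weights with at least two positive components,
`VaR_p(∑ θᵢXᵢ) > ∑ θᵢ VaR_p(Xᵢ) = VaR_p(X)` for every `p ∈ (0,1)`. -/
theorem stmt14 {Ω : Type*} [MeasurableSpace Ω] (P : Measure Ω) [IsProbabilityMeasure P]
    (n : ℕ) (α : ℝ) (hα : α ∈ Set.Ioc (0:ℝ) 1)
    (X : Ω → ℝ) (Xs : Fin n → Ω → ℝ)
    (hX : IsPareto P X α) (hXs : ∀ i, IsPareto P (Xs i) α)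
    (hind : iIndepFun Xs P)
    (θ : Fin n → ℝ) (hθ : ∀ i, 0 ≤ θ i) (hsum : ∑ i, θ i = 1)
    (htwo : ∃ i j, i ≠ j ∧ 0 < θ i ∧ 0 < θ j) :
    ∀ p ∈ Set.Ioo (0:ℝ) 1,
      (∑ i, θ i * VaR P (Xs i) p = VaR P X p) ∧
      ∑ i, θ i * VaR P (Xs i) p < VaR P (fun ω => ∑ i, θ i * Xs i ω) p := by
  intro p hp
  set q := (1 - p) ^ (-α⁻¹)
  have hVaR : ∀ Z, IsPareto P Z α → VaR P Z p = q := fun Z hZ => hZ.VaR_eq hα.1 hp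
  have hmean : ∑ i, θ i * VaR P (Xs i) p = q := by
    simp only [hVaR _ (hXs _), ← Finset.sum_mul, hsum, one_mul]
  refine ⟨hmean.trans (hVaR X hX).symm, hmean ▸ ?_⟩
  have htail := rpow_neg_lt_measureReal_sum_mul_gt hα.1 hα.2 hXs hind hθ hsum htwo
    (Real.one_lt_one_sub_rpow_neg_inv hp.1 hp.2 hα.1)
  rw [Real.one_sub_rpow_neg_inv_rpow_neg hp.2 hα.1.ne'] at htail
  exact lt_VaR_of_lt_measureReal_gt
    (Finset.measurable_sum _ fun i _ => measurable_const.mul (hXs i).1) hp.2 htail
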